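/- arXiv:2203.15569 — 5 statements merged into one kernel-verified Lean document; each statement's English description precedes it below -/
import Mathlib

section
/- The polynomials β₀ = x, γ₀ = 2x³t − s², δ₀ = 3x⁶u − 3x³st + s³, and g = 9x⁶u² − 18x³stu + 6s³u + 8x³t³ − 3s²t² all lie in the kernel of the derivation Δ = x³·∂/∂s + s·∂/∂t + t·∂/∂u on K[x,s,t,u]. -/
open MvPolynomial

/-- The derivation `Δ = x³ ∂/∂s + s ∂/∂t + t ∂/∂u` on `K[x,s,t,u]`,
where `x, s, t, u` are `X 0, X 1, X 2, X 3`. -/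
noncomputable def Δ (K : Type*) [Field K] [CharZero K] :
    Derivation K (MvPolynomial (Fin 4) K) (MvPolynomial (Fin 4) K) :=
  mkDerivation K ![0, X 0 ^ 3, X 1, X 2]

/-- `β₀ = x`, `γ₀ = 2x³t − s²`, `δ₀ = 3x⁶u − 3x³st + s³` and
`g = 9x⁶u² − 18x³stu + 6s³u + 8x³t³ − 3s²t²` lie in the kernel of `Δ`. -/
theorem generators_in_ker_Delta (K : Type*) [Field K] [CharZero K] :
    Δ K (X 0) = 0 ∧
    Δ K (2 * X 0 ^ 3 * X 2 - X 1 ^ 2) = 0 ∧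
    Δ K (3 * X 0 ^ 6 * X 3 - 3 * X 0 ^ 3 * X 1 * X 2 + X 1 ^ 3) = 0 ∧
    Δ K (9 * X 0 ^ 6 * X 3 ^ 2 - 18 * X 0 ^ 3 * X 1 * X 2 * X 3 + 6 * X 1 ^ 3 * X 3
        + 8 * X 0 ^ 3 * X 2 ^ 3 - 3 * X 1 ^ 2 * X 2 ^ 2) = 0 := by
  have h : ∀ i, Δ K (X i) = ![0, X 0 ^ 3, X 1, X 2] i := fun i => mkDerivation_X _ _ _
  have hn : ∀ (n : ℕ) [n.AtLeastTwo],
      Δ K (OfNat.ofNat n : MvPolynomial (Fin 4) K) = 0 := fun n _ => by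
    rw [show (OfNat.ofNat n : MvPolynomial (Fin 4) K) = ((OfNat.ofNat n : ℕ) : MvPolynomial (Fin 4) K) by push_cast; ring]
    exact Derivation.map_natCast (Δ K) _
  refine ⟨?_, ?_, ?_, ?_⟩ <;>
    · simp only [map_sub, map_add, Derivation.leibniz, Derivation.leibniz_pow,
        Derivation.map_smul_of_tower, h, hn]
      show (_ : MvPolynomial (Fin 4) K) = 0
      simp only [Matrix.cons_val_zero, Matrix.cons_val_one, Matrix.head_cons, Matrix.cons_val_two, Matrix.cons_val_three, Matrix.tail_cons, smul_eq_mul,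
        Matrix.cons_val_fin_one, Fin.isValue]
      try ring
end

section
/- The assignment ρ with ρ(x)=0, ρ(s)=1, ρ(t)=2, ρ(u)=3, ρ(v)=1 defines a grading on R = K[x,s,t,u,v] such that for any ρ-homogeneous p of ρ-degree i and q of ρ-degree j, their product has ρ-degree i+j; moreover if m is a monomial of ρ-degree n then Dⁿ(m) ≠ 0 and D^{n+1}(m) = 0, where D is the derivation x³·∂/∂s + s·∂/∂t + t·∂/∂u + x²·∂/∂v. -/
/-!
Multiplicativity of the grading is immediate. If `D^(a+1) x = 0` and
`D^(b+1) y = 0` then `D^(a+b+1) (x y) = 0` by the Leibniz rule, and every generator `g` satisfies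
`D^(ρ(g)+1) g = 0`; hence `D^(n+1)` kills a monomial of ρ-degree `n`. For `Dⁿ m ≠ 0`, specialise
`x ↦ 1`, `s ↦ λ`, `t ↦ λ²/2`, `u ↦ λ³/6`, `v ↦ λ`: this intertwines `D` with `d/dλ` and sends `m`
to a nonzero multiple of `λⁿ`, whose `n`-th derivative is a nonzero constant in characteristic zero.
-/

open MvPolynomial

/-- The derivation `D = x³ ∂/∂s + s ∂/∂t + t ∂/∂u + x² ∂/∂v` on `K[x,s,t,u,v]`,
where `x, s, t, u, v` are `X 0, X 1, X 2, X 3, X 4`. -/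
noncomputable def D (K : Type*) [Field K] [CharZero K] :
    Derivation K (MvPolynomial (Fin 5) K) (MvPolynomial (Fin 5) K) :=
  mkDerivation K ![0, X 0 ^ 3, X 1, X 2, X 0 ^ 2]

/-- The ρ-weights: `ρ(x) = 0`, `ρ(s) = 1`, `ρ(t) = 2`, `ρ(u) = 3`, `ρ(v) = 1`. -/
def ρw : Fin 5 → ℕ := ![0, 1, 2, 3, 1]

namespace Derivation

variable {R A : Type*} [CommSemiring R] [CommSemiring A] [Algebra R A] (δ : Derivation R A A)

theorem iterate_add_succ_mul_eq_zero {a b : ℕ} {x y : A} (hx : (⇑δ)^[a + 1] x = 0)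
    (hy : (⇑δ)^[b + 1] y = 0) : (⇑δ)^[a + b + 1] (x * y) = 0 := by
  induction h : a + b generalizing a b x y with
  | zero =>
    obtain ⟨rfl, rfl⟩ : a = 0 ∧ b = 0 := by omega
    simp_all [leibniz]
  | succ n ih =>
    rw [Function.iterate_succ_apply, leibniz, smul_eq_mul, smul_eq_mul, iterate_map_add]
    have left : (⇑δ)^[n + 1] (x * δ y) = 0 := by
      rcases b with _ | b
      · simp_all
      · exact ih hx (by rwa [← Function.iterate_succ_apply]) (by omega)
    have right : (⇑δ)^[n + 1] (y * δ x) = 0 := by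
      rcases a with _ | a
      · simp_all
      · exact ih hy (by rwa [← Function.iterate_succ_apply]) (by omega)
    rw [left, right, add_zero]

theorem iterate_mul_succ_pow_eq_zero {a : ℕ} {x : A} (hx : (⇑δ)^[a + 1] x = 0) (k : ℕ) :
    (⇑δ)^[k * a + 1] (x ^ k) = 0 := by
  induction k with
  | zero => simp
  | succ k ih => simpa [pow_succ, add_mul] using δ.iterate_add_succ_mul_eq_zero ih hx

end Derivation

theorem MvPolynomial.semiconj_derivation_of_X {R σ A : Type*} [CommSemiring R] [CommSemiring A]
    [Algebra R A] (δ : Derivation R (MvPolynomial σ R) (MvPolynomial σ R))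
    (δ' : Derivation R A A) (φ : MvPolynomial σ R →ₐ[R] A)
    (h : ∀ i, φ (δ (X i)) = δ' (φ (X i))) : Function.Semiconj φ δ δ' := by
  intro p
  induction p using MvPolynomial.induction_on with
  | C a => simp [← algebraMap_eq]
  | add p q hp hq => simp only [map_add, hp, hq]
  | mul_X p i hp => simp only [Derivation.leibniz, smul_eq_mul, map_add, map_mul, hp, h]

noncomputable def Φ (K : Type*) [Field K] : MvPolynomial (Fin 5) K →ₐ[K] Polynomial K :=
  aeval ![1, Polynomial.X, Polynomial.C (2⁻¹ : K) * Polynomial.X ^ 2,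
    Polynomial.C (6⁻¹ : K) * Polynomial.X ^ 3, Polynomial.X]

theorem Φ_monomial (K : Type*) [Field K] (a b c d e : ℕ) :
    Φ K (X 0 ^ a * X 1 ^ b * X 2 ^ c * X 3 ^ d * X 4 ^ e) =
      Polynomial.C ((2⁻¹ : K) ^ c * 6⁻¹ ^ d) * Polynomial.X ^ (b + 2 * c + 3 * d + e) := by
  simp only [Φ, map_mul, map_pow, aeval_X, Matrix.cons_val_zero, Matrix.cons_val_one,
    Matrix.cons_val, one_pow, one_mul]
  ring

section

variable (K : Type*) [Field K] [CharZero K]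

theorem D_X (i : Fin 5) : D K (X i) = ![0, X 0 ^ 3, X 1, X 2, X 0 ^ 2] i :=
  mkDerivation_X K _ i

theorem iterate_D_ρw_succ_X (i : Fin 5) : (⇑(D K))^[ρw i + 1] (X i) = 0 := by
  have hx : D K (X 0) = 0 := D_X K 0
  fin_cases i <;> simp [ρw, D_X, Derivation.leibniz_pow, hx]

theorem iterate_D_succ_monomial (a b c d e : ℕ) :
    (⇑(D K))^[b + 2 * c + 3 * d + e + 1]
      (X 0 ^ a * X 1 ^ b * X 2 ^ c * X 3 ^ d * X 4 ^ e : MvPolynomial (Fin 5) K) = 0 := by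
  have h i k := (D K).iterate_mul_succ_pow_eq_zero (iterate_D_ρw_succ_X K i) k
  have := (D K).iterate_add_succ_mul_eq_zero ((D K).iterate_add_succ_mul_eq_zero
    ((D K).iterate_add_succ_mul_eq_zero ((D K).iterate_add_succ_mul_eq_zero
      (h 0 a) (h 1 b)) (h 2 c)) (h 3 d)) (h 4 e)
  convert this using 2
  simp [ρw]
  ring

theorem semiconj_Φ_D : Function.Semiconj (Φ K) (D K) (Polynomial.derivative (R := K)) := by
  refine semiconj_derivation_of_X (D K) Polynomial.derivative' (Φ K) fun i => ?_
  fin_cases i <;> simp [Φ, D_X]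
  all_goals rw [← mul_assoc, ← Polynomial.C_ofNat, ← Polynomial.C_mul]; norm_num

theorem iterate_D_monomial_ne_zero (a b c d e : ℕ) :
    (⇑(D K))^[b + 2 * c + 3 * d + e]
      (X 0 ^ a * X 1 ^ b * X 2 ^ c * X 3 ^ d * X 4 ^ e : MvPolynomial (Fin 5) K) ≠ 0 := by
  intro h
  have := congrArg (Φ K) h
  rw [(semiconj_Φ_D K).iterate_right _ _, Φ_monomial, Polynomial.iterate_derivative_C_mul,
    Polynomial.iterate_derivative_X_pow_eq_C_mul, Nat.sub_self, pow_zero, mul_one,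
    Nat.descFactorial_self, map_zero, ← Polynomial.C_mul, Polynomial.C_eq_zero] at this
  simp [Nat.factorial_ne_zero] at this

end

/-- `ρ` defines a grading: the product of ρ-homogeneous elements of ρ-degrees `i` and
`j` is ρ-homogeneous of ρ-degree `i + j`; moreover a monomial
`x^a s^b t^c u^d v^e` of ρ-degree `n = b + 2c + 3d + e` satisfies `Dⁿ(m) ≠ 0` and
`D^(n+1)(m) = 0`. -/
theorem rho_grading (K : Type*) [Field K] [CharZero K] :
    (∀ (i j : ℕ) (p q : MvPolynomial (Fin 5) K),
      IsWeightedHomogeneous ρw p i → IsWeightedHomogeneous ρw q j →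
      IsWeightedHomogeneous ρw (p * q) (i + j)) ∧
    (∀ a b c d e : ℕ,
      ((D K).toLinearMap ^ (b + 2 * c + 3 * d + e))
          (X 0 ^ a * X 1 ^ b * X 2 ^ c * X 3 ^ d * X 4 ^ e) ≠ 0 ∧
      ((D K).toLinearMap ^ (b + 2 * c + 3 * d + e + 1))
          (X 0 ^ a * X 1 ^ b * X 2 ^ c * X 3 ^ d * X 4 ^ e) = 0) := by
  refine ⟨fun i j p q hp hq => hp.mul hq, fun a b c d e => ?_⟩
  simp only [Module.End.pow_apply]
  exact ⟨iterate_D_monomial_ne_zero K a b c d e, iterate_D_succ_monomial K a b c d e⟩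
end

section
/- There exists a polynomial p ∈ ker(D) (namely 2x³t − s²) with D(p) = 0 but such that some individual monomial term m of p satisfies D²(m) ≠ 0; i.e., ρ(2x³t − s²) = 2 while D(2x³t − s²) = 0. -/
open MvPolynomial

lemma DX0 (K : Type*) [Field K] [CharZero K] : D K (X 0) = 0 := by
  simp [D, mkDerivation_X]
lemma DX1 (K : Type*) [Field K] [CharZero K] : D K (X 1) = X 0 ^ 3 := by
  simp [D, mkDerivation_X]
lemma DX2 (K : Type*) [Field K] [CharZero K] : D K (X 2) = X 1 := by
  simp [D, mkDerivation_X]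

/-- `p = 2x³t − s²` satisfies `D(p) = 0`, yet its monomial term `2x³t` satisfies
`D²(2x³t) ≠ 0` and `D³(2x³t) = 0`; thus `ρ(2x³t − s²) = 2` while `D(2x³t − s²) = 0`. -/
theorem rho_differs_from_nilpotency_index (K : Type*) [Field K] [CharZero K] :
    D K (2 * X 0 ^ 3 * X 2 - X 1 ^ 2) = 0 ∧
    ((D K).toLinearMap ^ 2) (2 * X 0 ^ 3 * X 2) ≠ 0 ∧
    ((D K).toLinearMap ^ 3) (2 * X 0 ^ 3 * X 2) = 0 := by
  have h2 : D K (2 : MvPolynomial (Fin 5) K) = 0 := by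
    rw [show (2 : MvPolynomial (Fin 5) K) = algebraMap K _ 2 by
      simp [MvPolynomial.algebraMap_eq, map_ofNat], Derivation.map_algebraMap]
  refine ⟨?_, ?_, ?_⟩
  · rw [map_sub]
    simp [Derivation.leibniz, Derivation.leibniz_pow, h2, DX0, DX1, DX2]
    ring
  · have : ((D K).toLinearMap ^ 2) (2 * X 0 ^ 3 * X 2) = 2 * X 0 ^ 6 := by
      simp [pow_succ, Derivation.leibniz, Derivation.leibniz_pow, h2, DX0, DX1, DX2]
      ring
    rw [this]
    exact mul_ne_zero two_ne_zero (pow_ne_zero _ (X_ne_zero 0))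
  · have : ((D K).toLinearMap ^ 2) (2 * X 0 ^ 3 * X 2) = 2 * X 0 ^ 6 := by
      simp [pow_succ, Derivation.leibniz, Derivation.leibniz_pow, h2, DX0, DX1, DX2]
      ring
    rw [pow_succ', Module.End.mul_apply, this]
    simp [Derivation.leibniz, Derivation.leibniz_pow, h2, DX0]
end

section
/- For every k ≥ 0, the (k+1)×(k+1) matrix with (i,p)-entry C(2p, i) for 0 ≤ i, p ≤ k has nonzero determinant (over the rationals). -/
open Polynomial Matrix

noncomputable def myq (i : ℕ) : ℚ[X] :=
  C ((i.factorial : ℚ))⁻¹ * ((descPochhammer ℚ i).comp (C 2 * X))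

lemma two_comp_natDegree (i : ℕ) :
    ((descPochhammer ℚ i).comp (C 2 * X)).natDegree = i := by
  rw [natDegree_comp, descPochhammer_natDegree, natDegree_C_mul (by norm_num), natDegree_X,
    mul_one]

lemma myq_eval (i p : ℕ) : (myq i).eval (p : ℚ) = ((2 * p).choose i : ℚ) := by
  simp only [myq, eval_mul, eval_C, eval_comp, eval_X]
  rw [show (2 : ℚ) * p = ((2 * p : ℕ) : ℚ) by push_cast; ring,
    descPochhammer_eval_eq_descFactorial, Nat.descFactorial_eq_factorial_mul_choose]
  push_cast
  rw [← mul_assoc, inv_mul_cancel₀ (by exact_mod_cast i.factorial_ne_zero), one_mul]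

lemma myq_natDegree (i : ℕ) : (myq i).natDegree = i := by
  rw [myq, natDegree_C_mul (by positivity), two_comp_natDegree]

lemma myq_leadingCoeff_ne (i : ℕ) : (myq i).coeff i ≠ 0 := by
  have h : (myq i).coeff i = (myq i).leadingCoeff := by rw [leadingCoeff, myq_natDegree]
  rw [h, myq, leadingCoeff_mul, leadingCoeff_C,
    leadingCoeff_comp (by rw [natDegree_C_mul (by norm_num : (2:ℚ) ≠ 0), natDegree_X]; norm_num),
    (monic_descPochhammer ℚ i).leadingCoeff, leadingCoeff_C_mul_X]
  positivity

/-- For every `k ≥ 0`, the `(k+1) × (k+1)` matrix with `(i, p)` entry the binomial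
coefficient `C(2p, i)` has nonzero determinant over `ℚ`. -/
theorem binomial_matrix_det_ne_zero (k : ℕ) :
    Matrix.det (Matrix.of fun i p : Fin (k + 1) =>
      ((Nat.choose (2 * (p : ℕ)) (i : ℕ) : ℚ))) ≠ 0 := by
  have hM : (Matrix.of fun i p : Fin (k + 1) =>
      ((Nat.choose (2 * (p : ℕ)) (i : ℕ) : ℚ))) =
      (Matrix.of fun p i : Fin (k + 1) => (myq (i : ℕ)).eval (((p : ℕ) : ℚ)))ᵀ := by
    ext i p
    simp [myq_eval]
  rw [hM, det_transpose,
    eval_matrixOfPolynomials_eq_vandermonde_mul_matrixOfPolynomials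
      (fun p : Fin (k+1) => ((p : ℕ) : ℚ)) (fun i => myq (i : ℕ))
      (fun i => (myq_natDegree (i : ℕ)).le), det_mul]
  apply mul_ne_zero
  · rw [det_vandermonde_ne_zero_iff]
    intro a b hab
    simp only at hab
    exact Fin.ext (Nat.cast_injective hab)
  · rw [det_of_upperTriangular]
    · exact Finset.prod_ne_zero_iff.mpr fun i _ => myq_leadingCoeff_ne i
    · intro a b hab
      simp only [of_apply]
      exact coeff_eq_zero_of_natDegree_lt (by rw [myq_natDegree]; exact_mod_cast hab)
end

section
/- No nonzero element of the kernel of D is divisible by v; that is, if f ∈ K[x,s,t,u,v] satisfies D(v·f) = 0 then f = 0, where D = x³·∂/∂s + s·∂/∂t + t·∂/∂u + x²·∂/∂v. -/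
open MvPolynomial

/-!
Write `f = v ^ m * g` with `v ∤ g`. Then `D (v ^ (m + 1) * g) = v ^ m * ((m + 1) * D v * g + v * D g)`,
so if this vanishes, `v` divides `(m + 1) * D v * g`. As `m + 1` is a unit in characteristic zero and
`v` is prime, this forces `v ∣ D v = x²` or `v ∣ g`, both false.
-/

namespace Derivation

lemma apply_pow_succ_mul {A R : Type*} [CommSemiring A] [CommSemiring R] [Algebra A R]
    (d : Derivation A R R) (p g : R) (m : ℕ) :
    d (p ^ (m + 1) * g) = p ^ m * ((m + 1) * d p * g + p * d g) := by
  rw [leibniz, leibniz_pow, Nat.add_sub_cancel, smul_eq_mul, smul_eq_mul, nsmul_eq_mul]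
  push_cast
  ring

variable {K R : Type*} [Field K] [CharZero K] [CommRing R] [IsDomain R] [Algebra K R]

lemma apply_mul_ne_zero_of_prime [WfDvdMonoid R] (d : Derivation K R R) {p : R} (hp : Prime p)
    (hdp : ¬p ∣ d p) {f : R} (hf : f ≠ 0) : d (p * f) ≠ 0 := by
  obtain ⟨m, g, hpg, rfl⟩ := WfDvdMonoid.max_power_factor hf hp.irreducible
  intro hd
  rw [← mul_assoc, ← pow_succ', apply_pow_succ_mul, mul_eq_zero] at hd
  have hsum : (m + 1) * d p * g + p * d g = 0 := hd.resolve_left (pow_ne_zero m hp.ne_zero)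
  have hunit : IsUnit (m + 1 : R) := by
    simpa using (Nat.cast_add_one_ne_zero m : (m + 1 : K) ≠ 0).isUnit.map (algebraMap K R)
  have hdvd : p ∣ (m + 1) * (d p * g) := ⟨-d g, by linear_combination hsum⟩
  exact (hp.dvd_or_dvd (hunit.dvd_mul_left.mp hdvd)).elim hdp hpg

end Derivation

lemma D_X_four (K : Type*) [Field K] [CharZero K] : D K (X 4) = X 0 ^ 2 := by
  simp [D, mkDerivation_X]

/-- No nonzero element of `ker D` is divisible by `v`: if `D(v f) = 0` then `f = 0`. -/
theorem no_invariant_divisible_by_v (K : Type*) [Field K] [CharZero K]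
    (f : MvPolynomial (Fin 5) K) (h : D K (X 4 * f) = 0) : f = 0 := by
  by_contra hf
  have hv : Prime (X 4 : MvPolynomial (Fin 5) K) := X_prime
  have hDv : ¬(X 4 : MvPolynomial (Fin 5) K) ∣ D K (X 4) := by
    rw [D_X_four]
    exact fun hdvd ↦ absurd (X_dvd_X.mp (hv.dvd_of_dvd_pow hdvd)) (by decide)
  exact (D K).apply_mul_ne_zero_of_prime hv hDv hf h
end
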